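/- arXiv:math/0310032 — 4 statements merged into one kernel-verified Lean document; each statement's English description precedes it below -/
import Mathlib

section
/- Let X be a noetherian sober topological space (every nonempty irreducible closed subset has a unique generic point), and let Y ⊆ X be a subset stable under generization, i.e., if y ∈ Y and y lies in the closure of {x}, then x ∈ Y. Give Y the subspace topology and let f : Y → X be the inclusion. Then for every flabby sheaf F of abelian groups on X, the pullback (restriction) sheaf f⁻¹F on Y is flabby. -/
/-!
A section `t` of `f⁻¹F` over `V` is locally the image of sections `sᵢ` of `F` over opens
`Uᵢ` of `X`, and finitely many suffice because `Y` is noetherian. The sections `sᵢ` and `sⱼ`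
have the same germs at the points of `Y ∩ Uᵢ ∩ Uⱼ`, hence agree on an open set
`Eᵢⱼ ⊇ Y ∩ Uᵢ ∩ Uⱼ`. The closure of `(Uᵢ ∩ Uⱼ) \ Eᵢⱼ` misses `Y`: the generic points of its
irreducible components lie in `(Uᵢ ∩ Uⱼ) \ Eᵢⱼ`, which contains no point of `Y`, and `Y` is
stable under generization. Removing these finitely many closed sets leaves an open `W ⊇ Y` on
which the `sᵢ` glue; flabbiness extends the glued section to all of `X`, and its image in
`f⁻¹F` restricts to `t`.
-/

open CategoryTheory TopologicalSpace

/-- A presheaf of abelian groups is flabby (flasque) if for every open `U` the restriction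
map from global sections `F(X) → F(U)` is surjective. -/
def IsFlabby {X : TopCat} (F : TopCat.Presheaf Ab X) : Prop :=
  ∀ U : Opens X, Function.Surjective (F.map (homOfLE (le_top : U ≤ ⊤)).op)

/-- The inclusion of a subset `Y ⊆ X` (with the subspace topology) as a morphism of
topological spaces. -/
def subsetIncl (X : TopCat) (Y : Set X) : TopCat.of Y ⟶ X :=
  TopCat.ofHom ⟨Subtype.val, continuous_subtype_val⟩

open Set Opposite Topology
open scoped AlgebraicGeometry

universe u v

theorem exists_specializes_of_mem_closure_inter {X : Type*} [TopologicalSpace X]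
    [NoetherianSpace X] [QuasiSober X] {O Z : Set X} (hO : IsOpen O) (hZ : IsClosed Z)
    {y : X} (hy : y ∈ closure (O ∩ Z)) : ∃ x ∈ O ∩ Z, x ⤳ y := by
  have hcover : O ∩ Z = ⋃ C ∈ irreducibleComponents ↥(O ∩ Z), Subtype.val '' C := by
    rw [← image_iUnion₂, ← sUnion_eq_biUnion, sUnion_irreducibleComponents, image_univ,
      Subtype.range_coe]
  rw [hcover, NoetherianSpace.finite_irreducibleComponents.closure_biUnion, mem_iUnion₂] at hy
  obtain ⟨C, hC, hyC⟩ := hy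
  have hCirr : IsIrreducible (Subtype.val '' C) :=
    hC.1.image _ continuous_subtype_val.continuousOn
  have hgen := hCirr.isGenericPoint_genericPoint_closure
  have hCsub : Subtype.val '' C ⊆ O ∩ Z := by
    rintro _ ⟨x, -, rfl⟩
    exact x.2
  refine ⟨hCirr.genericPoint, ⟨?_, ?_⟩, hgen.specializes hyC⟩
  · exact (hgen.mem_open_set_iff hO).mpr
      (hCirr.nonempty.mono fun x hx => ⟨subset_closure hx, (hCsub hx).1⟩)
  · exact closure_minimal (hCsub.trans inter_subset_right) hZ hgen.mem

section StableUnderGeneralization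

variable {X : Type*} [TopologicalSpace X] [NoetherianSpace X] [QuasiSober X] {Y : Set X}

theorem StableUnderGeneralization.disjoint_closure_diff (hY : StableUnderGeneralization Y)
    {O E : Set X} (hO : IsOpen O) (hE : IsOpen E) (hOE : O ∩ Y ⊆ E) :
    Disjoint (closure (O \ E)) Y := by
  refine disjoint_left.mpr fun y hy hyY => ?_
  obtain ⟨x, ⟨hxO, hxE⟩, hxy⟩ :=
    exists_specializes_of_mem_closure_inter hO hE.isClosed_compl hy
  exact hxE (hOE ⟨hxO, hY hxy hyY⟩)

theorem StableUnderGeneralization.exists_isOpen_superset_forall_inter_subset {ι : Type*}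
    [Finite ι] (hY : StableUnderGeneralization Y) {O E : ι → Set X} (hO : ∀ i, IsOpen (O i))
    (hE : ∀ i, IsOpen (E i)) (hOE : ∀ i, O i ∩ Y ⊆ E i) :
    ∃ W, IsOpen W ∧ Y ⊆ W ∧ ∀ i, O i ∩ W ⊆ E i := by
  refine ⟨⋂ i, (closure (O i \ E i))ᶜ,
    isOpen_iInter_of_finite fun i => isClosed_closure.isOpen_compl,
    fun y hy => mem_iInter.mpr fun i hyc => ?_, fun i x hx => ?_⟩
  · exact disjoint_left.mp (hY.disjoint_closure_diff (hO i) (hE i) (hOE i)) hyc hy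
  · by_contra hxE
    exact mem_iInter.mp hx.2 i (subset_closure ⟨hx.1, hxE⟩)

end StableUnderGeneralization

theorem TopCat.Presheaf.isOpen_setOf_germ_eq {C : Type*} [Category.{u} C]
    [Limits.HasColimits C] {FC : C → C → Type*} {CC : C → Type u}
    [∀ X Y, FunLike (FC X Y) (CC X) (CC Y)] [ConcreteCategory.{u} C FC]
    [Limits.PreservesFilteredColimits (forget C)] {X : TopCat.{u}}
    (F : X.Presheaf C) {U V : Opens X} (s : ToType (F.obj (op U))) (t : ToType (F.obj (op V))) :
    IsOpen {x | ∃ (hU : x ∈ U) (hV : x ∈ V), F.germ U x hU s = F.germ V x hV t} := by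
  refine isOpen_iff_forall_mem_open.mpr fun x ⟨hU, hV, h⟩ => ?_
  obtain ⟨W, hxW, iU, iV, hW⟩ := F.germ_eq x hU hV s t h
  refine ⟨W, fun z hz => ⟨iU.le hz, iV.le hz, ?_⟩, W.isOpen, hxW⟩
  rw [← F.germ_res_apply iU z hz, ← F.germ_res_apply iV z hz, hW]

lemma IsFlabby.of_iso {X : TopCat.{u}} {F G : TopCat.Presheaf Ab.{v} X} (e : F ≅ G)
    (hF : IsFlabby F) : IsFlabby G := by
  intro U t
  obtain ⟨s, hs⟩ := hF U (e.inv.app (op U) t)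
  refine ⟨e.hom.app (op ⊤) s, ?_⟩
  rw [← NatTrans.naturality_apply, hs, Iso.inv_hom_id_app_apply]

lemma IsFlabby.exists_top_germ_eq {X : TopCat.{u}} {F : TopCat.Sheaf Ab.{u} X}
    (hF : IsFlabby F.obj) {ι : Type*} (U : ι → Opens X) (s : ∀ i, F.obj.obj (op (U i)))
    (hs : ∀ i j x (hi : x ∈ U i) (hj : x ∈ U j),
      F.presheaf.germ (U i) x hi (s i) = F.presheaf.germ (U j) x hj (s j)) :
    ∃ g : F.obj.obj (op ⊤), ∀ i x (hx : x ∈ U i),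
      F.presheaf.germ ⊤ x trivial g = F.presheaf.germ (U i) x hx (s i) := by
  have hcompat : TopCat.Presheaf.IsCompatible F.obj U s := fun i j =>
    TopCat.Presheaf.section_ext F _ _ _ fun x hx => by
      rw [F.presheaf.germ_res_apply, F.presheaf.germ_res_apply]
      exact hs i j x _ _
  obtain ⟨g, hg, -⟩ := F.existsUnique_gluing U s hcompat
  obtain ⟨g', hg'⟩ := hF (iSup U) g
  refine ⟨g', fun i x hx => ?_⟩
  rw [← hg i, F.presheaf.germ_res_apply, ← hg', F.presheaf.germ_res_apply]

lemma IsFlabby.exists_top_germ_eq_on_of_stableUnderGeneralization {X : TopCat.{u}}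
    [NoetherianSpace X] [QuasiSober X] {F : TopCat.Sheaf Ab.{u} X} (hF : IsFlabby F.obj)
    {Y : Set X} (hY : StableUnderGeneralization Y) {ι : Type*} [Finite ι] (U : ι → Opens X)
    (s : ∀ i, F.obj.obj (op (U i)))
    (hs : ∀ i j, ∀ x ∈ Y, ∀ (hi : x ∈ U i) (hj : x ∈ U j),
      F.presheaf.germ (U i) x hi (s i) = F.presheaf.germ (U j) x hj (s j)) :
    ∃ g : F.obj.obj (op ⊤), ∀ i, ∀ x ∈ Y, ∀ (hx : x ∈ U i),
      F.presheaf.germ ⊤ x trivial g = F.presheaf.germ (U i) x hx (s i) := by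
  obtain ⟨W, hW, hYW, hWE⟩ := hY.exists_isOpen_superset_forall_inter_subset
    (O := fun ij : ι × ι => U ij.1 ∩ U ij.2) (fun ij => (U ij.1).isOpen.inter (U ij.2).isOpen)
    (fun ij => F.presheaf.isOpen_setOf_germ_eq (s ij.1) (s ij.2))
    (fun ij x ⟨⟨hi, hj⟩, hxY⟩ => ⟨hi, hj, hs ij.1 ij.2 x hxY hi hj⟩)
  obtain ⟨g, hg⟩ := hF.exists_top_germ_eq (fun i => U i ⊓ ⟨W, hW⟩)
    (fun i => F.presheaf.map (homOfLE inf_le_left).op (s i)) fun i j x hi hj => by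
      obtain ⟨_, _, h⟩ := hWE (i, j) ⟨⟨hi.1, hj.1⟩, hi.2⟩
      rw [F.presheaf.germ_res_apply, F.presheaf.germ_res_apply]
      exact h
  exact ⟨g, fun i x hxY hx =>
    (hg i x ⟨hx, hYW hxY⟩).trans (F.presheaf.germ_res_apply _ _ _ _)⟩

namespace TopCat.Presheaf

variable {X Y : TopCat.{u}} (f : Y ⟶ X) (F : X.Presheaf Ab.{u})

-- `TopCat.Sheaf.pullback` up to `TopCat.Sheaf.pullbackIso`; in this form its stalks are
-- computed by `stalkPullbackIso` and `stalkFunctor_map_unit_toSheafify_isIso`.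
noncomputable abbrev sheafifiedPullback : Y.Sheaf Ab.{u} :=
  (presheafToSheaf (Opens.grothendieckTopology Y) Ab).obj ((pullback Ab f).obj F)

noncomputable def toSheafifiedPullback : F ⟶ f _* (sheafifiedPullback f F).obj :=
  (pullbackPushforwardAdjunction Ab f).unit.app F ≫
    (pushforward Ab f).map (CategoryTheory.toSheafify (Opens.grothendieckTopology Y) _)

noncomputable def sheafifiedPullbackStalkIso (y : Y) :
    F.stalk (f y) ≅ (sheafifiedPullback f F).presheaf.stalk y :=
  stalkPullbackIso Ab f F y ≪≫
    @asIso _ _ _ _ _ (stalkFunctor_map_unit_toSheafify_isIso y Ab ((pullback Ab f).obj F))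

lemma germ_sheafifiedPullbackStalkIso_hom (U : Opens X) (y : Y) (hy : f y ∈ U) :
    F.germ U (f y) hy ≫ (sheafifiedPullbackStalkIso f F y).hom =
      (toSheafifiedPullback f F).app (op U) ≫
        (sheafifiedPullback f F).presheaf.germ ((Opens.map f).obj U) y hy := by
  rw [sheafifiedPullbackStalkIso, stalkPullbackIso, Iso.trans_hom, germ_stalkPullbackHom_assoc,
    toSheafifiedPullback, NatTrans.comp_app, Category.assoc]
  exact congrArg _ (stalkFunctor_map_germ _ _ _ _)

lemma germ_toSheafifiedPullback_apply (U : Opens X) (y : Y) (hy : f y ∈ U)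
    (s : F.obj (op U)) :
    (sheafifiedPullback f F).presheaf.germ ((Opens.map f).obj U) y hy
        ((toSheafifiedPullback f F).app (op U) s) =
      (sheafifiedPullbackStalkIso f F y).hom (F.germ U (f y) hy s) :=
  (ConcreteCategory.congr_hom (germ_sheafifiedPullbackStalkIso_hom f F U y hy) s).symm

variable {f} in
lemma exists_germ_eq_toSheafifiedPullback (hf : IsInducing f) {V : Opens Y}
    (t : (sheafifiedPullback f F).presheaf.obj (op V)) {y : Y} (hy : y ∈ V) :
    ∃ (U : Opens X) (hUV : (Opens.map f).obj U ≤ V) (s : F.obj (op U)), f y ∈ U ∧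
      ∀ (z : Y) (hz : f z ∈ U), (sheafifiedPullback f F).presheaf.germ V z (hUV hz) t =
        (sheafifiedPullbackStalkIso f F z).hom (F.germ U (f z) hz s) := by
  obtain ⟨U₀, hyU₀, s₀, hs₀⟩ :=
    F.exists_germ_eq ((sheafifiedPullbackStalkIso f F y).inv
      ((sheafifiedPullback f F).presheaf.germ V y hy t))
  have hgerm : (sheafifiedPullback f F).presheaf.germ V y hy t =
      (sheafifiedPullback f F).presheaf.germ _ y hyU₀
        ((toSheafifiedPullback f F).app (op U₀) s₀) := by
    rw [germ_toSheafifiedPullback_apply, hs₀, Iso.inv_hom_id_apply]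
  obtain ⟨W, hyW, iV, iU, hW⟩ := (sheafifiedPullback f F).presheaf.germ_eq y hy hyU₀ _ _ hgerm
  obtain ⟨W', hW'open, hW'⟩ := hf.isOpen_iff.mp W.isOpen
  have hW'W : ∀ z, f z ∈ W' → z ∈ W := fun z hz => by rwa [← SetLike.mem_coe, ← hW']
  refine ⟨U₀ ⊓ ⟨W', hW'open⟩, fun z hz => iV.le (hW'W z hz.2),
    F.map (homOfLE inf_le_left).op s₀, ⟨hyU₀, show f y ∈ W' by rwa [← Set.mem_preimage, hW']⟩,
    fun z hz => ?_⟩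
  rw [← germ_res_apply _ iV z (hW'W z hz.2) t, hW, germ_res_apply]
  exact (germ_toSheafifiedPullback_apply f F U₀ z hz.1 s₀).trans (by rw [F.germ_res_apply])

end TopCat.Presheaf

open TopCat.Presheaf in
theorem isFlabby_sheafifiedPullback {X Y : TopCat.{u}} [NoetherianSpace X] [QuasiSober X]
    {f : Y ⟶ X} (hf : IsInducing f) (hfY : StableUnderGeneralization (range f))
    {F : X.Sheaf Ab.{u}} (hF : IsFlabby F.obj) : IsFlabby (sheafifiedPullback f F.obj).obj := by
  intro V t
  choose U hUV s hU hts using fun y : V => exists_germ_eq_toSheafifiedPullback F.obj hf t y.2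
  have : NoetherianSpace Y := hf.noetherianSpace
  obtain ⟨I, hI⟩ := (NoetherianSpace.isCompact (V : Set Y)).elim_finite_subcover
    (fun i => f ⁻¹' U i) (fun i => (U i).isOpen.preimage f.hom.continuous)
    fun y hy => mem_iUnion.mpr ⟨⟨y, hy⟩, hU _⟩
  obtain ⟨g, hg⟩ := hF.exists_top_germ_eq_on_of_stableUnderGeneralization hfY
    (fun i : I => U i) (fun i => s i) fun i j x hx hi hj => by
      obtain ⟨z, rfl⟩ := hx
      rw [← Iso.hom_inv_id_apply (sheafifiedPullbackStalkIso f F.obj z)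
          (F.presheaf.germ _ _ hi _),
        ← Iso.hom_inv_id_apply (sheafifiedPullbackStalkIso f F.obj z) (F.presheaf.germ _ _ hj _),
        ← hts i z hi, ← hts j z hj]
  refine ⟨(sheafifiedPullback f F.obj).presheaf.map (homOfLE (Opens.map_top f).ge).op
      ((toSheafifiedPullback f F.obj).app (op ⊤) g),
    section_ext _ _ _ _ fun z hz => ?_⟩
  obtain ⟨i, hi, hzi⟩ := mem_iUnion₂.mp (hI hz)
  rw [germ_res_apply, germ_res_apply]
  refine (germ_toSheafifiedPullback_apply f F.obj ⊤ z trivial g).trans ?_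
  rw [hg ⟨i, hi⟩ (f z) ⟨z, rfl⟩ hzi, hts]

theorem stmt_2_general (X : TopCat) [TopologicalSpace.NoetherianSpace X] [QuasiSober X]
    (Y : Set X)
    (hY : ∀ y ∈ Y, ∀ x : X, (y : X) ∈ closure ({x} : Set X) → x ∈ Y)
    (F : TopCat.Sheaf Ab X) (hF : IsFlabby F.val) :
    IsFlabby ((TopCat.Sheaf.pullback Ab (subsetIncl X Y)).obj F).val := by
  have hgen : StableUnderGeneralization (range (subsetIncl X Y)) := by
    rintro _ x hxy ⟨y, rfl⟩
    exact ⟨⟨x, hY y y.2 x (specializes_iff_mem_closure.mp hxy)⟩, rfl⟩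
  exact (isFlabby_sheafifiedPullback IsEmbedding.subtypeVal.isInducing hgen hF).of_iso
    ((sheafToPresheaf _ _).mapIso ((TopCat.Sheaf.pullbackIso Ab (subsetIncl X Y)).app F).symm)

/-- Let `X` be a noetherian sober space and `Y ⊆ X` a subset stable under
generization, with subspace topology and inclusion `f : Y → X`.  For every flabby sheaf `F`
of abelian groups on `X`, the pullback sheaf `f⁻¹F` on `Y` is flabby. -/
theorem stmt_2 (X : TopCat) [TopologicalSpace.NoetherianSpace X] [QuasiSober X] [T0Space X]
    (Y : Set X)
    (hY : ∀ y ∈ Y, ∀ x : X, (y : X) ∈ closure ({x} : Set X) → x ∈ Y)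
    (F : TopCat.Sheaf Ab X) (hF : IsFlabby F.val) :
    IsFlabby ((TopCat.Sheaf.pullback Ab (subsetIncl X Y)).obj F).val :=
  stmt_2_general X Y hY F hF
end

section
/- Let A → B be a homomorphism of commutative rings and π : B → C a surjective A-algebra homomorphism with kernel I. Assume that C is formally smooth as an A-algebra. Then the conormal sequence 0 → I/I² → C ⊗_B Ω_{B/A} → Ω_{C/A} → 0 is a split exact sequence of C-modules. -/
/-! Formal smoothness lifts the identity of `C` through the square-zero thickening `B ⧸ I² → C`;
such a section of `B ⧸ I² → C` is the same as a retraction of `I/I² → C ⊗_B Ω_{B/A}`, which is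
therefore injective. The right-hand map splits because `Ω_{C/A}` is a projective `C`-module. -/

open TensorProduct

universe u

namespace Algebra.FormallySmooth

variable {A B C : Type*} [CommRing A] [CommRing B] [CommRing C] [Algebra A B] [Algebra A C]

theorem exists_kerSquareLift_comp_eq_id [FormallySmooth A C] (f : B →ₐ[A] C)
    (hf : Function.Surjective f) : ∃ g, f.kerSquareLift.comp g = AlgHom.id A C := by
  have hsurj : Function.Surjective f.kerSquareLift :=
    Function.Surjective.of_comp (g := Ideal.Quotient.mk _) hf
  have hnil : IsNilpotent (RingHom.ker f.kerSquareLift.toRingHom) :=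
    ⟨2, by rw [AlgHom.ker_kerSquareLift, Ideal.cotangentIdeal_square, Ideal.zero_eq_bot]⟩
  exact ⟨liftOfSurjective _ _ hsurj hnil, comp_liftOfSurjective _ _ hsurj hnil⟩

variable [Algebra B C] [IsScalarTower A B C] [FormallySmooth A C]

theorem exists_retraction_kerCotangentToTensor (hf : Function.Surjective (algebraMap B C)) :
    ∃ l, l ∘ₗ KaehlerDifferential.kerCotangentToTensor A B C = LinearMap.id := by
  obtain ⟨g, hg⟩ := exists_kerSquareLift_comp_eq_id (IsScalarTower.toAlgHom A B C) hf
  exact ⟨_, ((retractionKerCotangentToTensorEquivSection hf).symm ⟨g, hg⟩).2⟩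

theorem injective_kerCotangentToTensor (hf : Function.Surjective (algebraMap B C)) :
    Function.Injective (KaehlerDifferential.kerCotangentToTensor A B C) := by
  obtain ⟨l, hl⟩ := exists_retraction_kerCotangentToTensor (A := A) hf
  exact Function.LeftInverse.injective (g := l) (LinearMap.congr_fun hl)

theorem exists_section_mapBaseChange (hf : Function.Surjective (algebraMap B C)) :
    ∃ s : KaehlerDifferential A C →ₗ[C] C ⊗[B] KaehlerDifferential A B,
      KaehlerDifferential.mapBaseChange A B C ∘ₗ s = LinearMap.id :=
  Module.projective_lifting_property _ _ (KaehlerDifferential.mapBaseChange_surjective A B C hf)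

end Algebra.FormallySmooth

/-- If `B → C` is a surjective `A`-algebra homomorphism with kernel `I` and `C`
is formally smooth over `A`, then the conormal sequence
`0 → I/I² → C ⊗_B Ω_{B/A} → Ω_{C/A} → 0` is a split exact sequence of `C`-modules:
the first map (from `I/I²` to `C ⊗_B Ω_{B/A}`) is injective, the sequence is exact in the
middle, the second map is surjective, and there is a `C`-linear splitting. -/
theorem stmt_7 (A B C : Type u) [CommRing A] [CommRing B] [CommRing C]
    [Algebra A B] [Algebra A C] [Algebra B C] [IsScalarTower A B C]
    (hsurj : Function.Surjective (algebraMap B C))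
    [Algebra.FormallySmooth A C] :
    Function.Injective (KaehlerDifferential.kerCotangentToTensor A B C) ∧
    Function.Exact (KaehlerDifferential.kerCotangentToTensor A B C)
      (KaehlerDifferential.mapBaseChange A B C) ∧
    Function.Surjective (KaehlerDifferential.mapBaseChange A B C) ∧
    ∃ s : KaehlerDifferential A C →ₗ[C] C ⊗[B] KaehlerDifferential A B,
      ∀ y, KaehlerDifferential.mapBaseChange A B C (s y) = y := by
  obtain ⟨s, hs⟩ := Algebra.FormallySmooth.exists_section_mapBaseChange (A := A) hsurj
  exact ⟨Algebra.FormallySmooth.injective_kerCotangentToTensor hsurj,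
    KaehlerDifferential.exact_kerCotangentToTensor_mapBaseChange A B C hsurj,
    KaehlerDifferential.mapBaseChange_surjective A B C hsurj, s, LinearMap.congr_fun hs⟩
end

section
/- Let (A, m) be a commutative noetherian local ring with residue field k, and let M be an A-module every element of which is annihilated by some power of m. Suppose there exists an ideal I ⊆ A such that for every integer n ≥ 1 the submodule M_n := {x ∈ M : Iⁿ x = 0} (identified with Hom_A(A/Iⁿ, M)) is an injective hull of k as an A/Iⁿ-module. Then M is an injective hull of k as an A-module. -/
open IsLocalRing

universe u v

open IsLocalRing

private lemma small_quot_of_torsion {A : Type u} [CommRing A] (m : Ideal A)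
    [Small.{v} (A ⧸ m)] (N : Type u) [AddCommGroup N] [Module A N] [Module.Finite A N]
    (hN : ∀ x : N, ∀ a ∈ m, a • x = 0) : Small.{v} N := by
  obtain ⟨s, hs⟩ := Module.Finite.fg_top (R := A) (M := N)
  set lift : A ⧸ m → A := Function.surjInv Ideal.Quotient.mk_surjective with hlift
  have hlift' : ∀ c : A ⧸ m, Ideal.Quotient.mk m (lift c) = c :=
    fun c => Function.surjInv_eq Ideal.Quotient.mk_surjective c
  have : Function.Surjective (fun c : (↥(s : Set N) → (A ⧸ m)) => ∑ i ∈ s.attach, lift (c ⟨i, i.2⟩) • (i : N)) := by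
    intro q
    have hq : q ∈ Submodule.span A (↑s : Set N) := hs ▸ Submodule.mem_top
    obtain ⟨f, -, hf⟩ := Submodule.mem_span_finset.1 hq
    refine ⟨fun i => Ideal.Quotient.mk m (f i), ?_⟩
    rw [← hf, ← Finset.sum_attach s (fun i => f i • i)]
    apply Finset.sum_congr rfl
    intro i _
    have : lift (Ideal.Quotient.mk m (f ↑i)) - f ↑i ∈ m := by
      rw [← Ideal.Quotient.eq]
      exact hlift' _
    have h0 := hN (i : N) _ this
    rw [sub_smul, sub_eq_zero] at h0
    exact h0
  exact small_of_surjective this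

private lemma small_of_pow_torsion {A : Type u} [CommRing A] [IsNoetherianRing A] (m : Ideal A)
    [Small.{v} (A ⧸ m)] :
    ∀ (n : ℕ) (N : Type u) [AddCommGroup N] [Module A N] [Module.Finite A N],
      (∀ x : N, ∀ a ∈ m ^ n, a • x = 0) → Small.{v} N := by
  intro n
  induction n with
  | zero =>
    intro N _ _ _ hN
    have : Subsingleton N := ⟨fun a b => by
      have ha := hN a 1 (by simp)
      have hb := hN b 1 (by simp)
      rw [one_smul] at ha hb
      rw [ha, hb]⟩
    infer_instance
  | succ n ih =>
    intro N _ _ _ hN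
    haveI : IsNoetherian A N := isNoetherian_of_isNoetherianRing_of_finite A N
    set N' : Submodule A N := m • ⊤ with hN'
    have htorN' : ∀ x : ↥N', ∀ a ∈ m ^ n, a • x = 0 := by
      rintro ⟨x, hx⟩ a ha
      have : a • x = 0 := by
        refine Submodule.smul_induction_on hx ?_ ?_
        · intro r hr y _
          rw [smul_smul]
          exact hN y _ (by rw [pow_succ]; exact Ideal.mul_mem_mul ha hr)
        · intro y z hy hz
          rw [smul_add, hy, hz, add_zero]
      exact Subtype.ext (by simpa using this)
    haveI := ih ↥N' htorN'
    have htorQ : ∀ x : N ⧸ N', ∀ a ∈ m, a • x = 0 := by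
      intro x a ha
      obtain ⟨y, rfl⟩ := N'.mkQ_surjective x
      show a • Submodule.Quotient.mk y = 0
      rw [← Submodule.Quotient.mk_smul, Submodule.Quotient.mk_eq_zero]
      exact Submodule.smul_mem_smul ha Submodule.mem_top
    haveI := small_quot_of_torsion m (N ⧸ N') htorQ
    set sec : (N ⧸ N') → N := Function.surjInv N'.mkQ_surjective with hsec
    have hsec' : ∀ q, N'.mkQ (sec q) = q := fun q => Function.surjInv_eq N'.mkQ_surjective q
    have hinj : Function.Injective
        (fun x : N => ((⟨x - sec (N'.mkQ x), by
          rw [← Submodule.Quotient.mk_eq_zero, ← Submodule.mkQ_apply, map_sub, hsec', sub_self]⟩ : ↥N'),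
          N'.mkQ x)) := by
      intro x y h
      obtain ⟨h1, h2⟩ := Prod.mk.injEq .. ▸ h
      have h1' : x - sec (N'.mkQ x) = y - sec (N'.mkQ y) := congrArg Subtype.val h1
      rw [h2] at h1'
      exact by linear_combination (norm := abel) h1'  -- x = y
    exact small_of_injective hinj

private lemma small_ring {A : Type u} [CommRing A] [IsNoetherianRing A] [IsLocalRing A]
    [Small.{v} (ResidueField A)] : Small.{v} A := by
  haveI : Small.{v} (A ⧸ maximalIdeal A) := inferInstanceAs (Small.{v} (ResidueField A))
  haveI : ∀ n : ℕ, Small.{v} (A ⧸ (maximalIdeal A ^ n)) := fun n => by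
    refine small_of_pow_torsion.{u,v} (maximalIdeal A) n (A ⧸ (maximalIdeal A ^ n)) ?_
    intro x a ha
    obtain ⟨b, rfl⟩ := Ideal.Quotient.mk_surjective x
    show a • Submodule.Quotient.mk b = 0
    rw [← Submodule.Quotient.mk_smul, Submodule.Quotient.mk_eq_zero]
    exact Ideal.mul_mem_right b _ ha
  have hinj : Function.Injective
      (fun (a : A) (n : ℕ) => Ideal.Quotient.mk (maximalIdeal A ^ n) a) := by
    intro x y h
    have hk := Ideal.iInf_pow_eq_bot_of_isLocalRing (maximalIdeal A)
      (Ideal.IsMaximal.ne_top (maximalIdeal.isMaximal A))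
    have : x - y ∈ (⨅ i : ℕ, maximalIdeal A ^ i) :=
      Submodule.mem_iInf _ |>.2 fun i => Ideal.Quotient.eq.mp (congrFun h i)
    rw [hk] at this
    exact sub_eq_zero.mp (Submodule.mem_bot A |>.mp this)
  exact small_of_injective hinj


open IsLocalRing


/-- Let `(A, m)` be a noetherian local ring with residue field `k` and `M` an
`A`-module all of whose elements are killed by a power of `m`.  If there is an ideal `I`
such that for every `n ≥ 1` the submodule `Mₙ = {x ∈ M | Iⁿ x = 0} = Hom_A(A/Iⁿ, M)` is an
injective hull of `k` over `A/Iⁿ` (i.e. it is an injective `A/Iⁿ`-module containing a copy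
of `k` as an essential submodule — since `Iⁿ` kills `Mₙ`, its `A`-submodules coincide with
its `A/Iⁿ`-submodules, so essentiality is stated via `A`-submodules), then `M` is an
injective hull of `k` over `A`. -/
theorem stmt_9 (A : Type*) [CommRing A] [IsNoetherianRing A] [IsLocalRing A]
    (M : Type*) [AddCommGroup M] [Module A M]
    (htor : ∀ x : M, ∃ n : ℕ, ∀ a ∈ maximalIdeal A ^ n, a • x = 0)
    (I : Ideal A)
    (hM : ∀ n : ℕ, 1 ≤ n →
      Module.Injective (A ⧸ I ^ n)
        (Submodule.torsionBySet A M ((I ^ n : Ideal A) : Set A)) ∧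
      ∃ f : ResidueField A →ₗ[A]
          Submodule.torsionBySet A M ((I ^ n : Ideal A) : Set A),
        Function.Injective f ∧
        ∀ P : Submodule A (Submodule.torsionBySet A M ((I ^ n : Ideal A) : Set A)),
          P ≠ ⊥ → LinearMap.range f ⊓ P ≠ ⊥) :
    Module.Injective A M ∧
    ∃ f : ResidueField A →ₗ[A] M, Function.Injective f ∧
      ∀ P : Submodule A M, P ≠ ⊥ → LinearMap.range f ⊓ P ≠ ⊥ := by
  -- I is not the unit ideal
  have hIne : I ≠ ⊤ := by
    rintro rfl
    obtain ⟨hinj1, f1, hf1inj, hf1ess⟩ := hM 1 le_rfl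
    have hsub : ∀ x : Submodule.torsionBySet A M (((⊤ : Ideal A) ^ 1 : Ideal A) : Set A),
        x = 0 := by
      rintro ⟨x, hx⟩
      have := (Submodule.mem_torsionBySet_iff _ _).mp hx ⟨1, by simp⟩
      exact Subtype.ext (by simpa using this)
    have h01 : (0 : ResidueField A) ≠ 1 := zero_ne_one
    exact h01 (hf1inj (by rw [hsub (f1 0), hsub (f1 1)]))
  have hIm : I ≤ maximalIdeal A := le_maximalIdeal hIne
  -- every element is I-power torsion
  have htorI : ∀ x : M, ∃ n : ℕ, ∀ a ∈ I ^ n, a • x = 0 := by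
    intro x
    obtain ⟨n, hn⟩ := htor x
    exact ⟨n, fun a ha => hn a (Ideal.pow_right_mono hIm n ha)⟩
  haveI hsmallk : Small.{u_2} (ResidueField A) := by
    obtain ⟨hinj1, f1, hf1inj, hf1ess⟩ := hM 1 le_rfl
    exact small_of_injective (f := fun c => ((f1 c : M)))
      (fun a b h => hf1inj (Subtype.val_injective h))
  haveI hsmallA : Small.{u_2} A := small_ring
  haveI hsmallR : ∀ m' : ℕ, Small.{u_2} (A ⧸ I ^ m') := fun m' =>
    small_of_surjective Ideal.Quotient.mk_surjective
  -- Baer's criterion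
  have baer : Module.Baer A M := by
    intro J g
    obtain ⟨s, hs⟩ := (IsNoetherian.noetherian J : J.FG)
    have hsub : ∀ a ∈ s, a ∈ J := fun a ha => hs ▸ Submodule.subset_span ha
    set F : M → ℕ := fun x => (htorI x).choose with hF
    have hFs : ∀ x, ∀ a ∈ I ^ F x, a • x = 0 := fun x => (htorI x).choose_spec
    set n : ℕ := 1 + s.attach.sup (fun i => F (g ⟨i.1, hsub i.1 i.2⟩)) with hn
    have hn1 : 1 ≤ n := Nat.le_add_right 1 _
    have hkill : ∀ (b) (hb : b ∈ J), ∀ c ∈ I ^ n, c • g ⟨b, hb⟩ = 0 := by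
      have key : ∀ b ∈ Submodule.span A (s : Set A),
          ∀ hb : b ∈ J, ∀ c ∈ I ^ n, c • g ⟨b, hb⟩ = 0 := by
        intro b hbs
        refine Submodule.span_induction ?_ ?_ ?_ ?_ hbs
        · intro a ha hb c hc
          have hFle : F (g ⟨a, hsub a ha⟩) ≤ n :=
            le_trans (Finset.le_sup (f := fun i => F (g ⟨i.1, hsub i.1 i.2⟩))
              (Finset.mem_attach s ⟨a, ha⟩)) (Nat.le_add_left _ 1)
          have heq : g ⟨a, hb⟩ = g ⟨a, hsub a ha⟩ := rfl
          rw [heq]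
          exact hFs _ c (Ideal.pow_le_pow_right hFle hc)
        · intro hb c hc
          have h0 : (⟨(0:A), hb⟩ : J) = 0 := rfl
          rw [h0, map_zero, smul_zero]
        · intro x y hxs hys ihx ihy hb c hc
          have hxJ : x ∈ J := hs ▸ hxs
          have hyJ : y ∈ J := hs ▸ hys
          have hadd : (⟨x + y, hb⟩ : J) = ⟨x, hxJ⟩ + ⟨y, hyJ⟩ := rfl
          rw [hadd, map_add, smul_add, ihx hxJ c hc, ihy hyJ c hc, add_zero]
        · intro a x hxs ihx hb c hc
          have hxJ : x ∈ J := hs ▸ hxs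
          have hsmul : (⟨a • x, hb⟩ : J) = a • ⟨x, hxJ⟩ := rfl
          rw [hsmul, map_smul, smul_comm, ihx hxJ c hc, smul_zero]
      exact fun b hb => key b (hs ▸ hb) hb
    -- Artin-Rees
    obtain ⟨k0, hk0⟩ := Ideal.exists_pow_inf_eq_pow_smul I (J : Submodule A A)
    set m' : ℕ := k0 + n with hm'
    have hm'n : n ≤ m' := Nat.le_add_left n k0
    have hm'1 : 1 ≤ m' := le_trans hn1 hm'n
    have hAR : ∀ a : A, a ∈ (I ^ m' : Ideal A) → a ∈ J →
        a ∈ (I ^ n • (J : Submodule A A) : Submodule A A) := by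
      intro a haI haJ
      have h1 : a ∈ (I ^ m' • (⊤ : Submodule A A)) ⊓ (J : Submodule A A) := by
        refine ⟨?_, haJ⟩
        have := Submodule.smul_mem_smul haI (Submodule.mem_top (x := (1:A)))
        simpa using this
      rw [hk0 m' (Nat.le_add_right k0 n)] at h1
      have h2 : m' - k0 = n := by omega
      rw [h2] at h1
      have hmono : I ^ n • ((I ^ k0 • ⊤ : Submodule A A) ⊓ (J : Submodule A A)) ≤
          I ^ n • (J : Submodule A A) := Submodule.smul_mono le_rfl inf_le_right
      exact hmono h1
    -- the torsion submodule
    set T := Submodule.torsionBySet A M ((I ^ m' : Ideal A) : Set A) with hT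
    have hrange : ∀ b : J, g b ∈ T := by
      intro b
      rw [Submodule.mem_torsionBySet_iff]
      rintro ⟨c, hc⟩
      exact hkill b.1 b.2 c (Ideal.pow_le_pow_right hm'n hc)
    set g' : J →ₗ[A] T := g.codRestrict T hrange with hg'
    -- the quotient ring and ideal
    set R := A ⧸ (I ^ m' : Ideal A) with hR
    set Jbar : Ideal R := J.map (Ideal.Quotient.mk (I ^ m')) with hJbar
    set JbarA : Submodule A R := Jbar.restrictScalars A with hJbarA
    have hmemJbar : ∀ x ∈ J, Ideal.Quotient.mk (I ^ m') x ∈ JbarA :=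
      fun x hx => Ideal.mem_map_of_mem _ hx
    set ρ : J →ₗ[A] JbarA :=
      (Algebra.linearMap A R).restrict (p := J) (q := JbarA)
        (fun x hx => hmemJbar x hx) with hρ
    have hρsurj : Function.Surjective ρ := by
      rintro ⟨y, hy⟩
      obtain ⟨x, hxJ, hxy⟩ := (Ideal.mem_map_iff_of_surjective _
        Ideal.Quotient.mk_surjective).mp hy
      exact ⟨⟨x, hxJ⟩, Subtype.ext hxy⟩
    have hker : LinearMap.ker ρ ≤ LinearMap.ker g' := by
      rintro ⟨x, hxJ⟩ hx
      have hx0 : Ideal.Quotient.mk (I ^ m') x = 0 := congrArg Subtype.val hx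
      have hxI : x ∈ (I ^ m' : Ideal A) := Ideal.Quotient.eq_zero_iff_mem.mp hx0
      have hxsmul := hAR x hxI hxJ
      -- g vanishes on I^n • J
      have hg0 : ∀ y ∈ (I ^ n • (J : Submodule A A) : Submodule A A),
          y ∈ J ∧ ∀ hyJ : y ∈ J, g ⟨y, hyJ⟩ = 0 := by
        intro y hy
        refine Submodule.smul_induction_on hy ?_ ?_
        · intro r hr z hz
          refine ⟨J.smul_mem r hz, fun h' => ?_⟩
          have : (⟨r • z, h'⟩ : J) = r • ⟨z, hz⟩ := rfl
          rw [this, map_smul]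
          exact hkill z hz r hr
        · rintro y z ⟨hyJ, ey⟩ ⟨hzJ, ez⟩
          refine ⟨J.add_mem hyJ hzJ, fun h' => ?_⟩
          have : (⟨y + z, h'⟩ : J) = ⟨y, hyJ⟩ + ⟨z, hzJ⟩ := rfl
          rw [this, map_add, ey hyJ, ez hzJ, add_zero]
      have := (hg0 x hxsmul).2 hxJ
      rw [LinearMap.mem_ker]
      exact Subtype.ext (by simpa [hg'] using this)
    -- factor g' through Jbar
    set e := ρ.quotKerEquivOfSurjective hρsurj with he
    set φ0 : JbarA →ₗ[A] T :=
      (Submodule.liftQ (LinearMap.ker ρ) g' hker) ∘ₗ (e.symm.toLinearMap) with hφ0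
    have hfac : ∀ x : J, φ0 (ρ x) = g' x := by
      intro x
      have h1 : e (Submodule.Quotient.mk x) = ρ x := rfl
      have h2 : e.symm (ρ x) = Submodule.Quotient.mk x := by
        rw [LinearEquiv.symm_apply_eq]; exact h1.symm
      simp [hφ0, h2]
    have hsmulR : ∀ (a : A) (y : R), a • y = Ideal.Quotient.mk (I ^ m') a * y := by
      intro a y
      rw [Algebra.smul_def, Ideal.Quotient.algebraMap_eq]
    set φ : Jbar →ₗ[R] T :=
      { toFun := fun x => φ0 ⟨x.1, x.2⟩
        map_add' := by
          rintro ⟨x, hx⟩ ⟨y, hy⟩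
          exact φ0.map_add ⟨x, hx⟩ ⟨y, hy⟩
        map_smul' := by
          rintro r ⟨x, hx⟩
          obtain ⟨a, rfl⟩ := Ideal.Quotient.mk_surjective r
          show φ0 _ = Ideal.Quotient.mk (I ^ m') a • φ0 ⟨x, hx⟩
          rw [Submodule.torsionBySet.mk_smul, ← map_smul φ0 a ⟨x, hx⟩]
          congr 1 } with hφ
    have hbaerR : Module.Baer R T := Module.Baer.of_injective (hM m' hm'1).1
    obtain ⟨h, hh⟩ := hbaerR Jbar φ
    refine ⟨LinearMap.toSpanSingleton A M ((h 1 : T) : M), ?_⟩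
    intro x hxJ
    have hx1 : Ideal.Quotient.mk (I ^ m') x ∈ Jbar := Ideal.mem_map_of_mem _ hxJ
    have hstep : x • (h 1) = h (Ideal.Quotient.mk (I ^ m') x) := by
      rw [← Submodule.torsionBySet.mk_smul (I ^ m') x (h 1), ← map_smul h,
        smul_eq_mul, mul_one]
    have hstep2 : h (Ideal.Quotient.mk (I ^ m') x) = φ ⟨_, hx1⟩ := hh _ hx1
    have hstep3 : φ ⟨Ideal.Quotient.mk (I ^ m') x, hx1⟩ = g' ⟨x, hxJ⟩ := by
      have hρx : (⟨Ideal.Quotient.mk (I ^ m') x, hx1⟩ : JbarA) = ρ ⟨x, hxJ⟩ :=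
        Subtype.ext rfl
      show φ0 ⟨Ideal.Quotient.mk (I ^ m') x, hx1⟩ = g' ⟨x, hxJ⟩
      rw [hρx, hfac ⟨x, hxJ⟩]
    show x • ((h 1 : T) : M) = g ⟨x, hxJ⟩
    have : x • ((h 1 : T) : M) = ((x • h 1 : T) : M) := rfl
    rw [this, hstep, hstep2, hstep3]
    rfl
  refine ⟨baer.injective, ?_⟩
  -- essential part
  set T1 := Submodule.torsionBySet A M ((I ^ 1 : Ideal A) : Set A) with hT1
  obtain ⟨hinj1, f1, hf1inj, hf1ess⟩ := hM 1 le_rfl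
  refine ⟨T1.subtype ∘ₗ f1, fun a b hab => hf1inj (Subtype.val_injective hab), ?_⟩
  have hra : LinearMap.range (T1.subtype ∘ₗ f1) = (LinearMap.range f1).map T1.subtype :=
    LinearMap.range_comp _ _
  set F1 : Submodule A M := (LinearMap.range f1).map T1.subtype with hF1
  haveI hks : IsSimpleModule A (ResidueField A) :=
    isSimpleModule_iff_isCoatom.mpr (Ideal.isMaximal_def.mp (maximalIdeal.isMaximal A))
  intro P hP
  rw [hra]
  obtain ⟨x, hxP, hx0⟩ := Submodule.ne_bot_iff _ |>.mp hP
  obtain ⟨n0, hn0⟩ := htorI x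
  set n := max n0 1 with hn
  have hn1 : 1 ≤ n := le_max_right _ _
  set Tn := Submodule.torsionBySet A M ((I ^ n : Ideal A) : Set A) with hTn
  have hxTn : x ∈ Tn := by
    rw [Submodule.mem_torsionBySet_iff]
    rintro ⟨c, hc⟩
    exact hn0 c (Ideal.pow_le_pow_right (le_max_left _ _) hc)
  obtain ⟨hinjn, fn, hfninj, hfness⟩ := hM n hn1
  have hT1Tn : T1 ≤ Tn := Submodule.torsionBySet_le_torsionBySet_of_subset
    (fun c hc => Ideal.pow_le_pow_right hn1 hc)
  set Fn : Submodule A M := (LinearMap.range fn).map Tn.subtype with hFn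
  have hrangen : LinearMap.range (Tn.subtype ∘ₗ fn) = Fn := LinearMap.range_comp _ _
  haveI hFnsimple : IsSimpleModule A Fn := by
    have e : ResidueField A ≃ₗ[A] Fn :=
      (LinearEquiv.ofInjective (Tn.subtype ∘ₗ fn)
        (Subtype.val_injective.comp hfninj)).trans (LinearEquiv.ofEq _ _ hrangen)
    exact IsSimpleModule.congr e.symm
  have hfTn : F1 ≤ Tn := by
    rintro _ ⟨y, hy, rfl⟩
    exact hT1Tn y.2
  have hFnle : Fn ≤ F1 := by
    set P' : Submodule A Tn := F1.comap Tn.subtype with hP'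
    have hP'ne : P' ≠ ⊥ := by
      rw [Submodule.ne_bot_iff]
      refine ⟨⟨(f1 1 : M), hfTn ⟨f1 1, ⟨1, rfl⟩, rfl⟩⟩, ⟨f1 1, ⟨1, rfl⟩, rfl⟩, fun h0 => ?_⟩
      have hh0 : (f1 1 : M) = 0 := congrArg Subtype.val h0
      have : f1 1 = 0 := Subtype.ext hh0
      exact one_ne_zero (hf1inj (by rw [this, map_zero]))
    obtain ⟨z, hz, hz0⟩ := Submodule.ne_bot_iff _ |>.mp (hfness P' hP'ne)
    obtain ⟨hzfn, hzP'⟩ := hz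
    have hzFn : (z : M) ∈ Fn := ⟨z, hzfn, rfl⟩
    have hzf : (z : M) ∈ F1 := hzP'
    have hzM0 : (z : M) ≠ 0 := fun h => hz0 (Subtype.ext h)
    have hne : F1.comap Fn.subtype ≠ ⊥ := by
      rw [Submodule.ne_bot_iff]
      exact ⟨⟨(z : M), hzFn⟩, hzf, fun h => hzM0 (congrArg Subtype.val h)⟩
    have htop : F1.comap Fn.subtype = ⊤ := (eq_bot_or_eq_top _).resolve_left hne
    intro w hw
    have hmem : (⟨w, hw⟩ : Fn) ∈ F1.comap Fn.subtype := by rw [htop]; trivial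
    exact hmem
  set Q : Submodule A Tn := Submodule.span A {(⟨x, hxTn⟩ : Tn)} with hQ
  have hQne : Q ≠ ⊥ := by
    rw [Submodule.ne_bot_iff]
    exact ⟨⟨x, hxTn⟩, Submodule.mem_span_singleton_self _,
      fun h => hx0 (congrArg Subtype.val h)⟩
  obtain ⟨z, hz, hz0⟩ := Submodule.ne_bot_iff _ |>.mp (hfness Q hQne)
  obtain ⟨hzfn, hzQ⟩ := hz
  obtain ⟨c, hc⟩ := Submodule.mem_span_singleton.mp hzQ
  rw [Submodule.ne_bot_iff]
  refine ⟨(z : M), ⟨hFnle ⟨z, hzfn, rfl⟩, ?_⟩, fun h => hz0 (Subtype.ext h)⟩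
  have hcx : (z : M) = c • x := by rw [← hc]; rfl
  rw [hcx]
  exact P.smul_mem c hxP
end

section
/- Let A be a commutative noetherian ring, I an ideal of A, S ⊆ A a multiplicative submonoid, and let A{S⁻¹} denote the (I·A_S)-adic completion of the localization A_S. Let M be an A-module each of whose elements is annihilated by some power of I. Then the natural map M ⊗_A A_S → M ⊗_A A{S⁻¹}, induced by the completion map A_S → A{S⁻¹}, is an isomorphism of A-modules. In particular, the localization M_S is naturally isomorphic to M ⊗_A A{S⁻¹}. -/
/-- `A{S⁻¹}`: the completion of the localization `A_S` along (the extension of) the ideal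
`I`, i.e. the `I·A_S`-adic completion of `Localization S`. -/
noncomputable abbrev CompletedLocalization (A : Type*) [CommRing A] (I : Ideal A)
    (S : Submonoid A) :=
  AdicCompletion (Ideal.map (algebraMap A (Localization S)) I) (Localization S)

noncomputable instance (A : Type*) [CommRing A] (I : Ideal A) (S : Submonoid A) :
    Algebra A (CompletedLocalization A I S) :=
  ((algebraMap (Localization S) (CompletedLocalization A I S)).comp
    (algebraMap A (Localization S))).toAlgebra

instance (A : Type*) [CommRing A] (I : Ideal A) (S : Submonoid A) :
    IsScalarTower A (Localization S) (CompletedLocalization A I S) :=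
  inferInstance

/-! A finitely generated submodule `N ⊆ M` is killed by a single power `Iᵏ`, so `N ⊗ A_S` and
`N ⊗ A{S⁻¹}` only see `A_S / Iᵏ A_S` and `A{S⁻¹} / Iᵏ A{S⁻¹}`. These agree, because completing
along the finitely generated ideal `I A_S` does not change the quotients by its powers. As
`A{S⁻¹}` is flat over `A`, the isomorphisms for the finitely generated `N` glue to one for `M`. -/

open TensorProduct LinearMap Submodule

section TorsionTensor

variable {A N : Type*} [CommRing A] [AddCommGroup N] [Module A N] {K : Ideal A}

lemma Module.IsTorsionBySet.lTensor_subtype_smul_top_eq_zero (hN : Module.IsTorsionBySet A N K)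
    (X : Type*) [AddCommGroup X] [Module A X] :
    lTensor N (K • ⊤ : Submodule A X).subtype = 0 := by
  refine TensorProduct.ext' fun m y => ?_
  obtain ⟨y, hy⟩ := y
  simp only [lTensor_tmul, Submodule.subtype_apply, LinearMap.zero_apply]
  refine Submodule.smul_induction_on hy (fun a ha x _ => ?_) (fun x z hx hz => ?_)
  · rw [← smul_tmul, hN (a := ⟨a, ha⟩), zero_tmul]
  · rw [tmul_add, hx, hz, add_zero]

lemma Module.IsTorsionBySet.lTensor_mkQ_smul_top_bijective (hN : Module.IsTorsionBySet A N K)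
    (X : Type*) [AddCommGroup X] [Module A X] :
    Function.Bijective (lTensor N (K • ⊤ : Submodule A X).mkQ) := by
  refine ⟨?_, lTensor_surjective N (mkQ_surjective _)⟩
  rw [← ker_eq_bot, lTensor_mkQ, hN.lTensor_subtype_smul_top_eq_zero, range_zero]

lemma Module.IsTorsionBySet.lTensor_bijective_of_bijective_mapQ
    (hN : Module.IsTorsionBySet A N K) {B C : Type*} [AddCommGroup B] [Module A B]
    [AddCommGroup C] [Module A C] (f : B →ₗ[A] C)
    (hf : Function.Bijective (mapQ (K • ⊤) (K • ⊤) f (smul_top_le_comap_smul_top K f))) :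
    Function.Bijective (lTensor N f) := by
  rw [← (hN.lTensor_mkQ_smul_top_bijective C).of_comp_iff', ← coe_comp, ← lTensor_comp,
    ← mapQ_mkQ (K • ⊤) (K • ⊤) f (h := smul_top_le_comap_smul_top K f), lTensor_comp, coe_comp]
  exact ((LinearEquiv.ofBijective _ hf).lTensor N).bijective.comp
    (hN.lTensor_mkQ_smul_top_bijective B)

end TorsionTensor

section RestrictScalars

variable {A B : Type*} [CommRing A] [CommRing B] [Algebra A B] (K : Ideal A)

noncomputable def Ideal.quotSMulTopEquivQuotMapSMulTop (Z : Type*) [AddCommGroup Z] [Module A Z]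
    [Module B Z] [IsScalarTower A B Z] :
    (Z ⧸ (K • ⊤ : Submodule A Z)) ≃ₗ[A] Z ⧸ (K.map (algebraMap A B) • ⊤ : Submodule B Z) :=
  (Submodule.quotEquivOfEq _ _ (by rw [Ideal.smul_restrictScalars, restrictScalars_top])).trans
    (Quotient.restrictScalarsEquiv A _)

lemma Submodule.mapQ_smul_top_restrictScalars_bijective {X Y : Type*}
    [AddCommGroup X] [Module A X] [Module B X] [IsScalarTower A B X]
    [AddCommGroup Y] [Module A Y] [Module B Y] [IsScalarTower A B Y] (g : X →ₗ[B] Y)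
    (hg : Function.Bijective (mapQ (K.map (algebraMap A B) • ⊤) (K.map (algebraMap A B) • ⊤) g
      (smul_top_le_comap_smul_top _ g))) :
    Function.Bijective (mapQ (K • ⊤) (K • ⊤) (g.restrictScalars A)
      (smul_top_le_comap_smul_top K _)) := by
  let eX := K.quotSMulTopEquivQuotMapSMulTop (B := B) X
  let eY := K.quotSMulTopEquivQuotMapSMulTop (B := B) Y
  have hconj : ⇑(mapQ (K • ⊤) (K • ⊤) (g.restrictScalars A) (smul_top_le_comap_smul_top K _)) =
      eY.symm ∘ mapQ _ _ g (smul_top_le_comap_smul_top _ g) ∘ eX := by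
    funext q
    induction q using Quotient.induction_on
    rfl
  rw [hconj]
  exact eY.symm.bijective.comp (hg.comp eX.bijective)

end RestrictScalars

namespace AdicCompletion

variable {R M : Type*} [CommRing R] [AddCommGroup M] [Module R M] {I : Ideal R}

lemma mapQ_of_pow_smul_top_bijective (hI : I.FG) (n : ℕ) :
    Function.Bijective (mapQ (I ^ n • ⊤) (I ^ n • ⊤) (of I M)
      (smul_top_le_comap_smul_top _ _)) := by
  refine ⟨(injective_iff_map_eq_zero _).2 fun q hq => ?_, fun q => ?_⟩
  · obtain ⟨x, rfl⟩ := mkQ_surjective _ q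
    rwa [mkQ_apply, mapQ_apply, Quotient.mk_eq_zero, pow_smul_top_eq_ker_eval hI, mem_ker,
      eval_of, mkQ_apply] at hq
  · obtain ⟨c, rfl⟩ := mkQ_surjective _ q
    obtain ⟨x, hx⟩ := mkQ_surjective _ (eval I M n c)
    refine ⟨mkQ _ x, ?_⟩
    rw [mkQ_apply, mapQ_apply, mkQ_apply, Submodule.Quotient.eq, pow_smul_top_eq_ker_eval hI,
      mem_ker, map_sub, eval_of, hx, sub_self]

end AdicCompletion

lemma Submodule.FG.exists_isTorsionBySet_pow {A M : Type*} [CommRing A] [AddCommGroup M]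
    [Module A M] {I : Ideal A} (htor : ∀ x : M, ∃ n : ℕ, ∀ a ∈ I ^ n, a • x = 0)
    {N : Submodule A M} (hN : N.FG) : ∃ k : ℕ, Module.IsTorsionBySet A N (I ^ k : Ideal A) := by
  classical
  obtain ⟨s, rfl⟩ := hN
  choose n hn using htor
  have hle : span A s ≤ torsionBySet A M (I ^ s.sup n : Ideal A) := span_le.2 fun y hy =>
    (mem_torsionBySet_iff _ _).2 fun a => hn y a (Ideal.pow_le_pow_right (Finset.le_sup hy) a.2)
  exact ⟨s.sup n, fun x a => Subtype.ext ((mem_torsionBySet_iff _ _).1 (hle x.2) a)⟩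

lemma LinearMap.lTensor_bijective_of_forall_fg {A M B C : Type*} [CommRing A] [AddCommGroup M]
    [Module A M] [AddCommGroup B] [Module A B] [AddCommGroup C] [Module A C] [Module.Flat A C]
    (f : B →ₗ[A] C) (h : ∀ N : Submodule A M, N.FG → Function.Bijective (lTensor N f)) :
    Function.Bijective (lTensor M f) := by
  have hnat (N : Submodule A M) :
      lTensor M f ∘ₗ rTensor B N.subtype = rTensor C N.subtype ∘ₗ lTensor N f := by
    rw [lTensor_comp_rTensor, rTensor_comp_lTensor]
  refine ⟨(injective_iff_map_eq_zero _).2 fun x hx => ?_, fun z => ?_⟩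
  · obtain ⟨N, hN, y, rfl⟩ := exists_fg_le_eq_rTensor_subtype x
    have hy : lTensor N f y = 0 :=
      Module.Flat.rTensor_preserves_injective_linearMap N.subtype N.injective_subtype
        (by rw [← comp_apply, ← hnat, comp_apply, hx, map_zero])
    rw [(h N hN).1 (hy.trans (map_zero _).symm), map_zero]
  · obtain ⟨N, hN, y, rfl⟩ := exists_fg_le_eq_rTensor_subtype z
    obtain ⟨w, rfl⟩ := (h N hN).2 y
    exact ⟨rTensor B N.subtype w, by rw [← comp_apply, hnat, comp_apply]⟩

/-- For a noetherian ring `A`, an ideal `I`, a multiplicative set `S`, and an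
`A`-module `M` all of whose elements are killed by a power of `I`, the natural map
`M ⊗_A A_S → M ⊗_A A{S⁻¹}` induced by the completion map `A_S → A{S⁻¹}` is an isomorphism
of `A`-modules.  (In particular `M_S ≅ M ⊗_A A{S⁻¹}`.) -/
theorem stmt_13 (A : Type*) [CommRing A] [IsNoetherianRing A] (I : Ideal A)
    (S : Submonoid A) (M : Type*) [AddCommGroup M] [Module A M]
    (htor : ∀ x : M, ∃ n : ℕ, ∀ a ∈ I ^ n, a • x = 0) :
    Function.Bijective
      (LinearMap.lTensor M
        ((Algebra.linearMap (Localization S)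
          (CompletedLocalization A I S)).restrictScalars A)) := by
  have : IsNoetherianRing (Localization S) := IsLocalization.isNoetherianRing S _ ‹_›
  have : Module.Flat A (CompletedLocalization A I S) := .trans A (Localization S) _
  refine lTensor_bijective_of_forall_fg _ fun N hN => ?_
  obtain ⟨k, hk⟩ := hN.exists_isTorsionBySet_pow htor
  refine hk.lTensor_bijective_of_bijective_mapQ _
    ((I ^ k).mapQ_smul_top_restrictScalars_bijective _ ?_)
  rw [Ideal.map_pow]
  exact AdicCompletion.mapQ_of_pow_smul_top_bijective (IsNoetherian.noetherian _) k
end
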